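/- Let G be a strong quasi-n-partite graph and I(G) ⊂ T its edge ideal. Then the Cohen–Macaulay type of the zero-dimensional ring T/I(G)̄ equals m_1 + … + m_n; concretely, the socle of T/I(G)̄, i.e., the annihilator of the maximal graded ideal (x_{11},…,x_{nm_n}) in T/I(G)̄, is a K-vector space of dimension m_1 + … + m_n. -/

import Mathlib

open MvPolynomial

/-- `f` is integral over the ideal `I`: it satisfies an equation
`f^k + c₁ f^(k-1) + ⋯ + c_k = 0` with `c_j ∈ I^j`. -/
def Ideal.IsIntegralElemOver {R : Type*} [CommRing R] (I : Ideal R) (f : R) : Prop :=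
  ∃ k : ℕ, 0 < k ∧ ∃ c : ℕ → R, (∀ j, 1 ≤ j → j ≤ k → c j ∈ I ^ j) ∧
    f ^ k + ∑ j ∈ Finset.Icc 1 k, c j * f ^ (k - j) = 0

/-- The integral closure of an ideal `I`, the ideal of all elements integral over `I`. -/
def Ideal.intClosure {R : Type*} [CommRing R] (I : Ideal R) : Ideal R :=
  Ideal.span {f | I.IsIntegralElemOver f}

/-- The edge ideal of the strong quasi-`n`-partite graph: the complete `n`-partite graph
on `V₁ ∪ ⋯ ∪ Vₙ`, `Vᵢ = {x_{i1}, …, x_{im_i}}`, with a loop at every vertex; it is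
generated by the `x_{ih} x_{i'h'}` with `i ≠ i'` and the `x_{ih}²`. -/
noncomputable def edgeIdealSQ (K : Type*) [Field K] (n : ℕ) (m : Fin n → ℕ) :
    Ideal (MvPolynomial (Σ i : Fin n, Fin (m i)) K) :=
  Ideal.span
    ({f | ∃ (i i' : Fin n) (h : Fin (m i)) (h' : Fin (m i')),
        i ≠ i' ∧ f = X ⟨i, h⟩ * X ⟨i', h'⟩} ∪
     {f | ∃ (i : Fin n) (h : Fin (m i)), f = X ⟨i, h⟩ ^ 2})

/-- The socle of `T/I` with respect to the ideal `J`: the annihilator of `J` in `T/I`,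
viewed as a `K`-subspace. -/
def socle {K : Type*} [Field K] {σ : Type*} (I J : Ideal (MvPolynomial σ K)) :
    Submodule K (MvPolynomial σ K ⧸ I) where
  carrier := {x | ∀ f ∈ J, Ideal.Quotient.mk I f * x = 0}
  add_mem' := by
    intro a b ha hb f hf
    rw [mul_add, ha f hf, hb f hf, add_zero]
  zero_mem' := by
    intro f hf
    rw [mul_zero]
  smul_mem' := by
    intro c x hx f hf
    rw [mul_smul_comm, hx f hf, smul_zero]

/-!
Write `𝔪` for the ideal of the variables. The edge ideal `I` lies between `(x_a²)` and `𝔪²`.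
Each `x_a x_b` is integral over `I`, as `(x_a x_b)² = x_a² x_b² ∈ I²`, and `𝔪²` is integrally
closed because the order of a polynomial (the lowest degree of a nonzero term) is additive over a
domain; hence `Ī = 𝔪²`. The socle of `T / 𝔪²` is `𝔪 / 𝔪²`, which has the classes of the variables
as a basis.
-/

theorem MvPowerSeries.order_pow {σ R : Type*} [CommSemiring R] [NoZeroDivisors R] [Nontrivial R]
    (f : MvPowerSeries σ R) (k : ℕ) : (f ^ k).order = k • f.order := by
  induction k with
  | zero => rw [pow_zero, zero_nsmul]; exact MvPowerSeries.weightedOrder_one _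
  | succ k ih => rw [pow_succ, MvPowerSeries.order_mul, ih, succ_nsmul]

theorem Ideal.isIntegralElemOver_of_pow_mem_pow {R : Type*} [CommRing R] {I : Ideal R} {f : R}
    {k : ℕ} (hk : 0 < k) (h : f ^ k ∈ I ^ k) : IsIntegralElemOver I f := by
  classical
  refine ⟨k, hk, fun j => if j = k then -f ^ k else 0, fun j _ hj => ?_, ?_⟩
  · dsimp only
    split_ifs with hjk
    · subst hjk; exact neg_mem h
    · exact zero_mem _
  · rw [Finset.sum_eq_single_of_mem k (Finset.mem_Icc.2 ⟨hk, le_rfl⟩)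
      (fun j _ hjk => by simp [hjk])]
    simp

namespace MvPolynomial

variable {σ R : Type*}

theorem mem_pow_idealOfVars_iff_le_order [CommSemiring R] (d : ℕ) (f : MvPolynomial σ R) :
    f ∈ idealOfVars σ R ^ d ↔ (d : ℕ∞) ≤ (f : MvPowerSeries σ R).order := by
  rw [mem_pow_idealOfVars_iff']
  refine ⟨fun h => MvPowerSeries.nat_le_order fun x hx => by simpa using h x hx,
    fun h x hx => ?_⟩
  simpa using MvPowerSeries.coeff_of_lt_order (lt_of_lt_of_le (by exact_mod_cast hx) h)

/-- If `f` had order `e < d`, then `f ^ k` would have order exactly `k * e`, since the order is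
additive over a domain, while every other term of the integral equation lies in
`idealOfVars σ R ^ (k * e + 1)`. -/
theorem mem_pow_idealOfVars_of_isIntegralElemOver [CommRing R] [IsDomain R] {d : ℕ}
    {I : Ideal (MvPolynomial σ R)} (hI : I ≤ idealOfVars σ R ^ d) {f : MvPolynomial σ R}
    (hf : Ideal.IsIntegralElemOver I f) : f ∈ idealOfVars σ R ^ d := by
  set M := idealOfVars σ R
  obtain ⟨k, hk, c, hc, heq⟩ := hf
  by_contra hfd
  rw [mem_pow_idealOfVars_iff_le_order, not_le] at hfd
  obtain ⟨e, he⟩ := ENat.ne_top_iff_exists.1 (ne_top_of_lt hfd)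
  have hed : e < d := by exact_mod_cast he ▸ hfd
  have hfe : f ∈ M ^ e := (mem_pow_idealOfVars_iff_le_order e f).2 he.le
  have hfk : f ^ k ∈ M ^ (k * e + 1) := by
    rw [eq_neg_of_add_eq_zero_left heq]
    refine neg_mem (Ideal.sum_mem _ fun j hj => ?_)
    obtain ⟨hj1, hjk⟩ := Finset.mem_Icc.1 hj
    have hterm : c j * f ^ (k - j) ∈ M ^ (d * j + e * (k - j)) := by
      rw [pow_add, pow_mul, pow_mul]
      exact Ideal.mul_mem_mul (Ideal.pow_right_mono hI j (hc j hj1 hjk))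
        (Ideal.pow_mem_pow hfe _)
    refine Ideal.pow_le_pow_right ?_ hterm
    nlinarith [Nat.sub_add_cancel hjk]
  rw [mem_pow_idealOfVars_iff_le_order, coe_pow, MvPowerSeries.order_pow, ← he,
    nsmul_eq_mul] at hfk
  norm_cast at hfk
  omega

theorem intClosure_eq_sq_idealOfVars [CommRing R] [IsDomain R] {I : Ideal (MvPolynomial σ R)}
    (hI : I ≤ idealOfVars σ R ^ 2) (hX : ∀ a, X a ^ 2 ∈ I) :
    I.intClosure = idealOfVars σ R ^ 2 := by
  refine le_antisymm
    (Ideal.span_le.2 fun f hf => mem_pow_idealOfVars_of_isIntegralElemOver hI hf) ?_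
  rw [pow_two, idealOfVars, Ideal.span_mul_span', Ideal.span_le]
  rintro _ ⟨_, ⟨a, rfl⟩, _, ⟨b, rfl⟩, rfl⟩
  refine Ideal.subset_span (Ideal.isIntegralElemOver_of_pow_mem_pow two_pos ?_)
  rw [mul_pow, pow_two I]
  exact Ideal.mul_mem_mul (hX a) (hX b)

theorem mem_pow_idealOfVars_of_X_mul_mem [CommSemiring R] {a : σ} {f : MvPolynomial σ R} {d : ℕ}
    (h : X a * f ∈ idealOfVars σ R ^ (d + 1)) : f ∈ idealOfVars σ R ^ d := by
  rw [mem_pow_idealOfVars_iff'] at h ⊢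
  intro x hx
  rw [← coeff_X_mul x a]
  exact h _ (by rw [map_add, Finsupp.degree_single]; omega)

theorem sub_C_constantCoeff_mem_idealOfVars [CommRing R] (g : MvPolynomial σ R) :
    g - C (constantCoeff g) ∈ idealOfVars σ R := by
  rw [← pow_one (idealOfVars σ R), mem_pow_idealOfVars_iff']
  intro x hx
  obtain rfl : x = 0 := (Finsupp.degree_eq_zero_iff x).1 (by omega)
  rw [coeff_sub, coeff_zero_C, constantCoeff_eq, sub_self]

theorem mk_mul_X_eq_constantCoeff_smul [CommRing R] (g : MvPolynomial σ R) (a : σ) :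
    Ideal.Quotient.mk (idealOfVars σ R ^ 2) (g * X a) =
      constantCoeff g • Ideal.Quotient.mk (idealOfVars σ R ^ 2) (X a) := by
  rw [Algebra.smul_def, ← Ideal.Quotient.mk_algebraMap, ← map_mul, Ideal.Quotient.eq,
    algebraMap_eq, ← sub_mul, pow_two]
  exact Ideal.mul_mem_mul (sub_C_constantCoeff_mem_idealOfVars g) (Ideal.subset_span ⟨a, rfl⟩)

theorem linearIndependent_mk_X_sq_idealOfVars [CommRing R] [Fintype σ] :
    LinearIndependent R fun a => Ideal.Quotient.mk (idealOfVars σ R ^ 2) (X a) := by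
  classical
  rw [Fintype.linearIndependent_iff]
  intro g hg a
  have hmem : (∑ b, C (g b) * X b) ∈ idealOfVars σ R ^ 2 := by
    rw [← Ideal.Quotient.eq_zero_iff_mem, ← hg]
    simp only [map_sum, mk_mul_X_eq_constantCoeff_smul, constantCoeff_C]
  have := (mem_pow_idealOfVars_iff' 2 _).1 hmem (Finsupp.single a 1) (by simp)
  simpa [coeff_sum, coeff_C_mul, coeff_X, Finsupp.single_left_inj] using this

section Socle

variable {K : Type*} [Field K]

theorem socle_sq_idealOfVars [Fintype σ] [Nonempty σ] :
    socle (idealOfVars σ K ^ 2) (idealOfVars σ K) =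
      Submodule.span K (Set.range fun a => Ideal.Quotient.mk (idealOfVars σ K ^ 2) (X a)) := by
  refine le_antisymm (fun x hx => ?_) (Submodule.span_le.2 ?_)
  · obtain ⟨f, rfl⟩ := Ideal.Quotient.mk_surjective x
    obtain ⟨a⟩ := ‹Nonempty σ›
    have hXf : X a * f ∈ idealOfVars σ K ^ 2 := by
      rw [← Ideal.Quotient.eq_zero_iff_mem, map_mul]
      exact hx _ (Ideal.subset_span ⟨a, rfl⟩)
    obtain ⟨g, rfl⟩ := Ideal.mem_span_range_iff_exists_fun.1
      (pow_one (idealOfVars σ K) ▸ mem_pow_idealOfVars_of_X_mul_mem hXf)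
    simp only [map_sum, mk_mul_X_eq_constantCoeff_smul]
    exact Submodule.sum_mem _ fun b _ => Submodule.smul_mem _ _ (Submodule.subset_span ⟨b, rfl⟩)
  · rintro _ ⟨a, rfl⟩ f hf
    rw [← map_mul, Ideal.Quotient.eq_zero_iff_mem, pow_two]
    exact Ideal.mul_mem_mul hf (Ideal.subset_span ⟨a, rfl⟩)

theorem finrank_socle_sq_idealOfVars [Fintype σ] [Nonempty σ] :
    Module.finrank K (socle (idealOfVars σ K ^ 2) (idealOfVars σ K)) = Fintype.card σ := by
  rw [socle_sq_idealOfVars, finrank_span_eq_card linearIndependent_mk_X_sq_idealOfVars]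

end Socle

end MvPolynomial

section EdgeIdeal

variable {K : Type*} [Field K] {n : ℕ} {m : Fin n → ℕ}

theorem edgeIdealSQ_le_sq_idealOfVars :
    edgeIdealSQ K n m ≤ idealOfVars (Σ i : Fin n, Fin (m i)) K ^ 2 := by
  rw [edgeIdealSQ, Ideal.span_le, pow_two]
  rintro _ (⟨_, _, _, _, -, rfl⟩ | ⟨_, _, rfl⟩)
  · exact Ideal.mul_mem_mul (Ideal.subset_span ⟨_, rfl⟩) (Ideal.subset_span ⟨_, rfl⟩)
  · exact pow_two (X _ : MvPolynomial _ K) ▸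
      Ideal.mul_mem_mul (Ideal.subset_span ⟨_, rfl⟩) (Ideal.subset_span ⟨_, rfl⟩)

theorem X_sq_mem_edgeIdealSQ (a : Σ i : Fin n, Fin (m i)) : X a ^ 2 ∈ edgeIdealSQ K n m :=
  Ideal.subset_span (Or.inr ⟨a.1, a.2, rfl⟩)

theorem intClosure_edgeIdealSQ :
    (edgeIdealSQ K n m).intClosure = idealOfVars (Σ i : Fin n, Fin (m i)) K ^ 2 :=
  MvPolynomial.intClosure_eq_sq_idealOfVars edgeIdealSQ_le_sq_idealOfVars X_sq_mem_edgeIdealSQ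

end EdgeIdeal

/-- The Cohen–Macaulay type of the zero-dimensional ring `T / I(G)̄`
equals `m₁ + ⋯ + mₙ`: the socle of `T / I(G)̄`, the annihilator of the maximal graded
ideal `(x_{11}, …, x_{nm_n})`, is a `K`-vector space of dimension `m₁ + ⋯ + mₙ`. -/
theorem stmt15 {K : Type*} [Field K] (n : ℕ) (hn : 1 ≤ n) (m : Fin n → ℕ)
    (hm : ∀ i, 1 ≤ m i) :
    Module.finrank K
      (socle ((edgeIdealSQ K n m).intClosure)
        (Ideal.span (Set.range (X : (Σ i : Fin n, Fin (m i)) →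
          MvPolynomial (Σ i : Fin n, Fin (m i)) K)))) = ∑ i, m i := by
  have : Nonempty (Σ i : Fin n, Fin (m i)) := ⟨⟨⟨0, hn⟩, ⟨0, hm _⟩⟩⟩
  rw [intClosure_edgeIdealSQ]
  simpa using MvPolynomial.finrank_socle_sq_idealOfVars (σ := Σ i : Fin n, Fin (m i)) (K := K)
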